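/- (MM descent step for the penalized logistic L₂E.) Let η ≥ η* := sup_{p∈[0,1]} ψ₁(p), λ > 0, α ∈ [0,1], and write θ = (β₀, β) ∈ ℝ × ℝᵖ. Define the surrogate M(θ; θ̃) = L(θ̃) + (2/n)(F(X̃θ̃) − y)ᵀ G_{θ̃} X̃ (θ − θ̃) + (η/(2n))‖X̃(θ − θ̃)‖₂² + λ(α‖β‖₁ + ((1−α)/2)‖β‖₂²), where G_{θ̃} is diagonal with entries F(x̃ᵢᵀθ̃)(1 − F(x̃ᵢᵀθ̃)). If θ⁺ = (β₀⁺, β⁺) satisfies M(θ⁺; θ̃) ≤ M(θ̃; θ̃), then L(θ⁺) + λ(α‖β⁺‖₁ + ((1−α)/2)‖β⁺‖₂²) ≤ L(θ̃) + λ(α‖β̃‖₁ + ((1−α)/2)‖β̃‖₂²). -/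

import Mathlib

open Finset

/-- The logistic function `F(u) = 1/(1 + exp(-u))`. -/
noncomputable def logisticF (u : ℝ) : ℝ := 1 / (1 + Real.exp (-u))

/-- `ψ_u(p) = [2p(1−p) − (2p−1)((2p−1) − u)]·p(1−p)`. -/
def psi (u p : ℝ) : ℝ := (2*p*(1-p) - (2*p-1)*((2*p-1) - u)) * (p*(1-p))

/-- The logistic L₂E loss `L(θ) = (1/n)∑ᵢ (yᵢ − F(x̃ᵢᵀθ))²`, where `θ 0` is the
intercept `β₀` and `θ j.succ = βⱼ`. -/
noncomputable def L2Eloss {n p : ℕ} (X : Matrix (Fin n) (Fin (p+1)) ℝ)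
    (y : Fin n → ℝ) (θ : Fin (p+1) → ℝ) : ℝ :=
  (1/(n:ℝ)) * ∑ i, (y i - logisticF (∑ j, X i j * θ j))^2

/-- The Elastic Net penalty `λ(α‖β‖₁ + ((1−α)/2)‖β‖₂²)` on the non-intercept
coordinates `β = (θ 1, …, θ p)` of `θ = (β₀, β)`. -/
noncomputable def enPen {p : ℕ} (lam α : ℝ) (θ : Fin (p+1) → ℝ) : ℝ :=
  lam * (α * ∑ j : Fin p, |θ j.succ| + ((1 - α)/2) * ∑ j : Fin p, (θ j.succ)^2)

/-- The penalized quadratic surrogate `M(θ; θ̃)` of Theorem 4.1. -/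
noncomputable def surrogate {n p : ℕ} (X : Matrix (Fin n) (Fin (p+1)) ℝ)
    (y : Fin n → ℝ) (η lam α : ℝ) (θ θt : Fin (p+1) → ℝ) : ℝ :=
  L2Eloss X y θt
    + (2/(n:ℝ)) * ∑ i,
        (logisticF (∑ j, X i j * θt j) - y i)
          * (logisticF (∑ j, X i j * θt j) * (1 - logisticF (∑ j, X i j * θt j)))
          * (∑ j, X i j * (θ j - θt j))
    + (η/(2*(n:ℝ))) * ∑ i, (∑ j, X i j * (θ j - θt j))^2
    + enPen lam α θ

/-!
The squared error `ℓ(t) = (y - F t)²` of a single sample has second derivative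
`(2q(1-q) + 2(q-y)(1-2q))·q(1-q)` with `q = F t`, which is `ψ₁(q)` for `y = 1` and `ψ₁(1-q)` for
`y = 0`. Hence `ℓ'' ≤ η` everywhere, so `t ↦ η t²/2 - ℓ t` is convex and lies above its tangent
lines: `ℓ` is majorized by its second-order expansion with curvature `η`. Summing over samples,
`M(·; θ̃)` majorizes the penalized loss and touches it at `θ̃`, so the MM step cannot increase it.
-/

open Real

lemma logisticF_eq_sigmoid : logisticF = sigmoid := by
  funext u
  rw [logisticF, sigmoid_def, one_div]

lemma ConvexOn.add_mul_sub_le_of_hasDerivAt {S : Set ℝ} {f : ℝ → ℝ} {f' x y : ℝ}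
    (hfc : ConvexOn ℝ S f) (hx : x ∈ S) (hy : y ∈ S) (hf : HasDerivAt f f' x) :
    f x + f' * (y - x) ≤ f y := by
  rcases lt_trichotomy x y with hxy | rfl | hyx
  · have h := hfc.le_slope_of_hasDerivAt hx hy hxy hf
    rw [slope_def_field, le_div_iff₀ (sub_pos.2 hxy)] at h
    linarith
  · simp
  · have h := hfc.slope_le_of_hasDerivAt hy hx hyx hf
    rw [slope_def_field, div_le_iff₀ (sub_pos.2 hyx)] at h
    linarith

lemma le_add_mul_add_sq_of_hasDerivAt_of_deriv2_le {f f' f'' : ℝ → ℝ} {η : ℝ}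
    (hf : ∀ t, HasDerivAt f (f' t) t) (hf' : ∀ t, HasDerivAt f' (f'' t) t)
    (hf'' : ∀ t, f'' t ≤ η) (a u : ℝ) :
    f (a + u) ≤ f a + f' a * u + η / 2 * u ^ 2 := by
  have hg : ∀ t, HasDerivAt (fun t => η / 2 * t ^ 2 - f t) (η * t - f' t) t := fun t =>
    (((hasDerivAt_pow 2 t).const_mul (η / 2)).sub (hf t)).congr_deriv (by ring)
  have hg' : ∀ t, HasDerivAt (fun t => η * t - f' t) (η - f'' t) t := fun t =>
    (((hasDerivAt_id' t).const_mul η).sub (hf' t)).congr_deriv (by ring)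
  have hconv : ConvexOn ℝ Set.univ (fun t => η / 2 * t ^ 2 - f t) := by
    refine convexOn_of_hasDerivWithinAt2_nonneg convex_univ
      (fun t _ => (hg t).continuousAt.continuousWithinAt)
      (fun t _ => (hg t).hasDerivWithinAt) (fun t _ => (hg' t).hasDerivWithinAt)
      (fun t _ => sub_nonneg.2 (hf'' t))
  have := hconv.add_mul_sub_le_of_hasDerivAt (Set.mem_univ a) (Set.mem_univ (a + u)) (hg a)
  simp only [add_sub_cancel_left] at this
  linarith

lemma psi_one_le_of_sSup_le {η : ℝ} (hη : sSup (psi 1 '' Set.Icc (0:ℝ) 1) ≤ η) :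
    ∀ q ∈ Set.Icc (0:ℝ) 1, psi 1 q ≤ η := by
  have hbdd : BddAbove (psi 1 '' Set.Icc (0:ℝ) 1) :=
    (isCompact_Icc.image (by unfold psi; fun_prop)).bddAbove
  exact fun q hq => (le_csSup hbdd ⟨q, hq, rfl⟩).trans hη

lemma sq_sub_sigmoid_deriv2_le {η y q : ℝ} (hψ : ∀ q ∈ Set.Icc (0:ℝ) 1, psi 1 q ≤ η)
    (hy : y = 0 ∨ y = 1) (hq : q ∈ Set.Icc (0:ℝ) 1) :
    (2 * (q * (1 - q)) + 2 * ((q - y) * (1 - 2 * q))) * (q * (1 - q)) ≤ η := by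
  rcases hy with rfl | rfl
  · convert hψ (1 - q) ⟨by linarith [hq.2], by linarith [hq.1]⟩ using 1
    unfold psi; ring
  · convert hψ q hq using 1
    unfold psi; ring

lemma sq_sub_sigmoid_add_le {η y : ℝ} (hψ : ∀ q ∈ Set.Icc (0:ℝ) 1, psi 1 q ≤ η)
    (hy : y = 0 ∨ y = 1) (a u : ℝ) :
    (y - sigmoid (a + u)) ^ 2 ≤ (y - sigmoid a) ^ 2
      + 2 * ((sigmoid a - y) * (sigmoid a * (1 - sigmoid a)) * u) + η / 2 * u ^ 2 := by
  have hσ := hasDerivAt_sigmoid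
  have hf : ∀ t, HasDerivAt (fun t => (y - sigmoid t) ^ 2)
      (2 * ((sigmoid t - y) * (sigmoid t * (1 - sigmoid t)))) t := fun t =>
    (((hσ t).const_sub y).pow 2).congr_deriv (by ring)
  have hf' : ∀ t, HasDerivAt (fun t => 2 * ((sigmoid t - y) * (sigmoid t * (1 - sigmoid t))))
      ((2 * (sigmoid t * (1 - sigmoid t)) + 2 * ((sigmoid t - y) * (1 - 2 * sigmoid t)))
        * (sigmoid t * (1 - sigmoid t))) t := fun t =>
    ((((hσ t).sub_const y).mul ((hσ t).mul ((hσ t).const_sub 1))).const_mul 2).congr_deriv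
      (by simp only [Pi.mul_apply]; ring)
  have hf'' := fun t => sq_sub_sigmoid_deriv2_le hψ hy
    ⟨sigmoid_nonneg t, sigmoid_le_one t⟩
  have := le_add_mul_add_sq_of_hasDerivAt_of_deriv2_le hf hf' hf'' a u
  linarith

section Surrogate

variable {n p : ℕ} (X : Matrix (Fin n) (Fin (p+1)) ℝ) (y : Fin n → ℝ) (η lam α : ℝ)

lemma surrogate_self (θ : Fin (p+1) → ℝ) :
    surrogate X y η lam α θ θ = L2Eloss X y θ + enPen lam α θ := by
  simp [surrogate]

lemma L2Eloss_add_enPen_le_surrogate (hy : ∀ i, y i = 0 ∨ y i = 1)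
    (hψ : ∀ q ∈ Set.Icc (0:ℝ) 1, psi 1 q ≤ η) (θ θt : Fin (p+1) → ℝ) :
    L2Eloss X y θ + enPen lam α θ ≤ surrogate X y η lam α θ θt := by
  have hlin : ∀ i, ∑ j, X i j * θ j = ∑ j, X i j * θt j + ∑ j, X i j * (θ j - θt j) := fun i => by
    rw [← Finset.sum_add_distrib]
    exact Finset.sum_congr rfl fun j _ => by ring
  have hsum := Finset.sum_le_sum fun i (_ : i ∈ Finset.univ) =>
    hlin i ▸ sq_sub_sigmoid_add_le hψ (hy i) (∑ j, X i j * θt j) (∑ j, X i j * (θ j - θt j))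
  rw [Finset.sum_add_distrib, Finset.sum_add_distrib, ← Finset.mul_sum, ← Finset.mul_sum] at hsum
  simp only [surrogate, L2Eloss, logisticF_eq_sigmoid]
  linear_combination (1 / (n:ℝ)) * hsum

end Surrogate

theorem stmt_11_general (n p : ℕ)
    (X : Matrix (Fin n) (Fin (p+1)) ℝ) (y : Fin n → ℝ)
    (hy : ∀ i, y i = 0 ∨ y i = 1)
    (η lam α : ℝ) (hη : sSup (psi 1 '' Set.Icc (0:ℝ) 1) ≤ η)
    (θplus θt : Fin (p+1) → ℝ)
    (hstep : surrogate X y η lam α θplus θt ≤ surrogate X y η lam α θt θt) :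
    L2Eloss X y θplus + enPen lam α θplus ≤ L2Eloss X y θt + enPen lam α θt := by
  calc L2Eloss X y θplus + enPen lam α θplus
      ≤ surrogate X y η lam α θplus θt :=
        L2Eloss_add_enPen_le_surrogate X y η lam α hy (psi_one_le_of_sSup_le hη) θplus θt
    _ ≤ surrogate X y η lam α θt θt := hstep
    _ = L2Eloss X y θt + enPen lam α θt := surrogate_self X y η lam α θt

/-- MM descent step for the penalized logistic L₂E: if
`η ≥ η* = sup_{p∈[0,1]} ψ₁(p)` and `θ⁺` satisfies `M(θ⁺; θ̃) ≤ M(θ̃; θ̃)`, then the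
penalized objective does not increase: `L(θ⁺) + J(β⁺) ≤ L(θ̃) + J(β̃)`. -/
theorem stmt_11 (n p : ℕ) (hn : 0 < n)
    (X : Matrix (Fin n) (Fin (p+1)) ℝ) (y : Fin n → ℝ)
    (hy : ∀ i, y i = 0 ∨ y i = 1)
    (η lam α : ℝ) (hη : sSup (psi 1 '' Set.Icc (0:ℝ) 1) ≤ η)
    (hlam : 0 < lam) (hα : α ∈ Set.Icc (0:ℝ) 1)
    (θplus θt : Fin (p+1) → ℝ)
    (hstep : surrogate X y η lam α θplus θt ≤ surrogate X y η lam α θt θt) :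
    L2Eloss X y θplus + enPen lam α θplus ≤ L2Eloss X y θt + enPen lam α θt :=
  stmt_11_general n p X y hy η lam α hη θplus θt hstep
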